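/- For every real α: if 1/(2·P_lL) > α > α_NL then ξ_NL(α) < Δ·(α − 1/2)/P_hL, and if α_NL ≥ α > 1/2 then ξ_NL(α) ≥ Δ·(α − 1/2)/P_hL. -/
import Mathlib

lemma le_of_sq_le (x y : ℝ) (h : x^2 ≤ y^2) (hy : 0 ≤ y) : x ≤ y := by
  nlinarith [sq_nonneg (x - y), sq_nonneg (x + y)]

lemma lt_of_sq_lt (x y : ℝ) (h : y^2 < x^2) (hx : 0 ≤ x) : y < x := by
  nlinarith [sq_nonneg (x - y), sq_nonneg (x + y)]

set_option maxHeartbeats 2000000 in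
lemma Hsum_nonneg (X Y Z : ℝ) (hX : 0 ≤ X) (hY : 0 ≤ Y) (hZ : 0 ≤ Z) :
    (0:ℝ) ≤ 1 * X^0 * Y^0 * Z^8 + 21 * X^0 * Y^1 * Z^7 + 174 * X^0 * Y^2 * Z^6 + 734 * X^0 * Y^3 * Z^5 + 1725 * X^0 * Y^4 * Z^4 + 2361 * X^0 * Y^5 * Z^3 + 1876 * X^0 * Y^6 * Z^2 + 804 * X^0 * Y^7 * Z^1 + 144 * X^0 * Y^8 * Z^0 + 14 * X^1 * Y^0 * Z^7 + 238 * X^1 * Y^1 * Z^6 + 1552 * X^1 * Y^2 * Z^5 + 5020 * X^1 * Y^3 * Z^4 + 8830 * X^1 * Y^4 * Z^3 + 8614 * X^1 * Y^5 * Z^2 + 4388 * X^1 * Y^6 * Z^1 + 912 * X^1 * Y^7 * Z^0 + 85 * X^2 * Y^0 * Z^6 + 1145 * X^2 * Y^1 * Z^5 + 5742 * X^2 * Y^2 * Z^4 + 13850 * X^2 * Y^3 * Z^3 + 17273 * X^2 * Y^4 * Z^2 + 10749 * X^2 * Y^5 * Z^1 + 2644 * X^2 * Y^6 * Z^0 +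 292 * X^3 * Y^0 * Z^5 + 3032 * X^3 * Y^1 * Z^4 + 11304 * X^3 * Y^2 * Z^3 + 19248 * X^3 * Y^3 * Z^2 + 15252 * X^3 * Y^4 * Z^1 + 4568 * X^3 * Y^5 * Z^0 + 620 * X^4 * Y^0 * Z^4 + 4776 * X^4 * Y^1 * Z^3 + 12512 * X^4 * Y^2 * Z^2 + 13480 * X^4 * Y^3 * Z^1 + 5124 * X^4 * Y^4 * Z^0 + 832 * X^5 * Y^0 * Z^3 + 4480 * X^5 * Y^1 * Z^2 + 7392 * X^5 * Y^2 * Z^1 + 3808 * X^5 * Y^3 * Z^0 + 688 * X^6 * Y^0 * Z^2 + 2320 * X^6 * Y^1 * Z^1 + 1824 * X^6 * Y^2 * Z^0 + 320 * X^7 * Y^0 * Z^1 + 512 * X^7 * Y^1 * Z^0 + 64 * X^8 * Y^0 * Z^0 := by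
  have pX : ∀ n : ℕ, (0:ℝ) ≤ X ^ n := fun n => pow_nonneg hX n
  have pY : ∀ n : ℕ, (0:ℝ) ≤ Y ^ n := fun n => pow_nonneg hY n
  have pZ : ∀ n : ℕ, (0:ℝ) ≤ Z ^ n := fun n => pow_nonneg hZ n
  exact add_nonneg (add_nonneg (add_nonneg (add_nonneg (add_nonneg (add_nonneg (add_nonneg (add_nonneg (add_nonneg (add_nonneg (add_nonneg (add_nonneg (add_nonneg (add_nonneg (add_nonneg (add_nonneg (add_nonneg (add_nonneg (add_nonneg (add_nonneg (add_nonneg (add_nonneg (add_nonneg (add_nonneg (add_nonneg (add_nonneg (add_nonneg (add_nonneg (add_nonneg (add_nonneg (add_nonneg (add_nonneg (add_nonneg (add_nonneg (add_nonneg (add_nonneg (add_nonneg (add_nonneg (add_nonneg (add_nonneg (add_nonneg (add_nonneg (add_nonneg (add_nonneg (mul_nonneg (mul_nonneg (mul_nonneg (by norm_num) (pX 0)) (pY 0)) (pZ 8)) (mul_nonneg (mul_nonneg (mul_nonneg (by norm_num) (pX 0)) (pY 1)) (pZ 7))) (mul_nonneg (mul_nonneg (mul_nonneg (by norm_num) (pX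 0)) (pY 2)) (pZ 6))) (mul_nonneg (mul_nonneg (mul_nonneg (by norm_num) (pX 0)) (pY 3)) (pZ 5))) (mul_nonneg (mul_nonneg (mul_nonneg (by norm_num) (pX 0)) (pY 4)) (pZ 4))) (mul_nonneg (mul_nonneg (mul_nonneg (by norm_num) (pX 0)) (pY 5)) (pZ 3))) (mul_nonneg (mul_nonneg (mul_nonneg (by norm_num) (pX 0)) (pY 6)) (pZ 2))) (mul_nonneg (mul_nonneg (mul_nonneg (by norm_num) (pX 0)) (pY 7)) (pZ 1))) (mul_nonneg (mul_nonneg (mul_nonneg (by norm_num) (pX 0)) (pY 8)) (pZ 0))) (mul_nonneg (mul_nonneg (mul_nonneg (by norm_num) (pX 1)) (pY 0)) (pZ 7))) (mul_nonneg (mul_nonneg (mul_nonneg (by norm_num) (pX 1)) (pY 1)) (pZ 6))) (mul_nonneg (mul_nonneg (mul_nonneg (by norm_num) (pX 1)) (pY 2)) (pZ 5))) (mul_nonneg (mul_nonneg (mul_nonneg (by norm_num) (pX 1)) (pY 3)) (pZ 4))) (mul_nonneg (mul_nonneg (mul_nonneg (by norm_num) (pX 1)) (pY 4)) (pZ 3)))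 (mul_nonneg (mul_nonneg (mul_nonneg (by norm_num) (pX 1)) (pY 5)) (pZ 2))) (mul_nonneg (mul_nonneg (mul_nonneg (by norm_num) (pX 1)) (pY 6)) (pZ 1))) (mul_nonneg (mul_nonneg (mul_nonneg (by norm_num) (pX 1)) (pY 7)) (pZ 0))) (mul_nonneg (mul_nonneg (mul_nonneg (by norm_num) (pX 2)) (pY 0)) (pZ 6))) (mul_nonneg (mul_nonneg (mul_nonneg (by norm_num) (pX 2)) (pY 1)) (pZ 5))) (mul_nonneg (mul_nonneg (mul_nonneg (by norm_num) (pX 2)) (pY 2)) (pZ 4))) (mul_nonneg (mul_nonneg (mul_nonneg (by norm_num) (pX 2)) (pY 3)) (pZ 3))) (mul_nonneg (mul_nonneg (mul_nonneg (by norm_num) (pX 2)) (pY 4)) (pZ 2))) (mul_nonneg (mul_nonneg (mul_nonneg (by norm_num) (pX 2)) (pY 5)) (pZ 1))) (mul_nonneg (mul_nonneg (mul_nonneg (by norm_num) (pX 2)) (pY 6)) (pZ 0))) (mul_nonneg (mul_nonneg (mul_nonneg (by norm_num) (pX 3)) (pY 0)) (pZ 5))) (mul_nonneg (mul_nonneg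 (mul_nonneg (by norm_num) (pX 3)) (pY 1)) (pZ 4))) (mul_nonneg (mul_nonneg (mul_nonneg (by norm_num) (pX 3)) (pY 2)) (pZ 3))) (mul_nonneg (mul_nonneg (mul_nonneg (by norm_num) (pX 3)) (pY 3)) (pZ 2))) (mul_nonneg (mul_nonneg (mul_nonneg (by norm_num) (pX 3)) (pY 4)) (pZ 1))) (mul_nonneg (mul_nonneg (mul_nonneg (by norm_num) (pX 3)) (pY 5)) (pZ 0))) (mul_nonneg (mul_nonneg (mul_nonneg (by norm_num) (pX 4)) (pY 0)) (pZ 4))) (mul_nonneg (mul_nonneg (mul_nonneg (by norm_num) (pX 4)) (pY 1)) (pZ 3))) (mul_nonneg (mul_nonneg (mul_nonneg (by norm_num) (pX 4)) (pY 2)) (pZ 2))) (mul_nonneg (mul_nonneg (mul_nonneg (by norm_num) (pX 4)) (pY 3)) (pZ 1))) (mul_nonneg (mul_nonneg (mul_nonneg (by norm_num) (pX 4)) (pY 4)) (pZ 0))) (mul_nonneg (mul_nonneg (mul_nonneg (by norm_num) (pX 5)) (pY 0)) (pZ 3))) (mul_nonneg (mul_nonneg (mul_nonneg (by norm_num) (pX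 5)) (pY 1)) (pZ 2))) (mul_nonneg (mul_nonneg (mul_nonneg (by norm_num) (pX 5)) (pY 2)) (pZ 1))) (mul_nonneg (mul_nonneg (mul_nonneg (by norm_num) (pX 5)) (pY 3)) (pZ 0))) (mul_nonneg (mul_nonneg (mul_nonneg (by norm_num) (pX 6)) (pY 0)) (pZ 2))) (mul_nonneg (mul_nonneg (mul_nonneg (by norm_num) (pX 6)) (pY 1)) (pZ 1))) (mul_nonneg (mul_nonneg (mul_nonneg (by norm_num) (pX 6)) (pY 2)) (pZ 0))) (mul_nonneg (mul_nonneg (mul_nonneg (by norm_num) (pX 7)) (pY 0)) (pZ 1))) (mul_nonneg (mul_nonneg (mul_nonneg (by norm_num) (pX 7)) (pY 1)) (pZ 0))) (mul_nonneg (mul_nonneg (mul_nonneg (by norm_num) (pX 8)) (pY 0)) (pZ 0))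

set_option maxHeartbeats 1000000 in
lemma Jsum_nonneg (X Y Z : ℝ) (hX : 0 ≤ X) (hY : 0 ≤ Y) (hZ : 0 ≤ Z) :
    (0:ℝ) ≤ 1 * X^0 * Y^0 * Z^4 + 10 * X^0 * Y^1 * Z^3 + 29 * X^0 * Y^2 * Z^2 + 32 * X^0 * Y^3 * Z^1 + 12 * X^0 * Y^4 * Z^0 + 6 * X^1 * Y^0 * Z^3 + 36 * X^1 * Y^1 * Z^2 + 62 * X^1 * Y^2 * Z^1 + 32 * X^1 * Y^3 * Z^0 + 13 * X^2 * Y^0 * Z^2 + 46 * X^2 * Y^1 * Z^1 + 37 * X^2 * Y^2 * Z^0 + 12 * X^3 * Y^0 * Z^1 + 20 * X^3 * Y^1 * Z^0 + 4 * X^4 * Y^0 * Z^0 := by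
  have pX : ∀ n : ℕ, (0:ℝ) ≤ X ^ n := fun n => pow_nonneg hX n
  have pY : ∀ n : ℕ, (0:ℝ) ≤ Y ^ n := fun n => pow_nonneg hY n
  have pZ : ∀ n : ℕ, (0:ℝ) ≤ Z ^ n := fun n => pow_nonneg hZ n
  exact add_nonneg (add_nonneg (add_nonneg (add_nonneg (add_nonneg (add_nonneg (add_nonneg (add_nonneg (add_nonneg (add_nonneg (add_nonneg (add_nonneg (add_nonneg (add_nonneg (mul_nonneg (mul_nonneg (mul_nonneg (by norm_num) (pX 0)) (pY 0)) (pZ 4)) (mul_nonneg (mul_nonneg (mul_nonneg (by norm_num) (pX 0)) (pY 1)) (pZ 3))) (mul_nonneg (mul_nonneg (mul_nonneg (by norm_num) (pX 0)) (pY 2)) (pZ 2))) (mul_nonneg (mul_nonneg (mul_nonneg (by norm_num) (pX 0)) (pY 3)) (pZ 1))) (mul_nonneg (mul_nonneg (mul_nonneg (by norm_num) (pX 0)) (pY 4)) (pZ 0))) (mul_nonneg (mul_nonneg (mul_nonneg (by norm_num) (pX 1)) (pY 0)) (pZ 3))) (mul_nonneg (mul_nonneg (mul_nonneg (by norm_num)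 (pX 1)) (pY 1)) (pZ 2))) (mul_nonneg (mul_nonneg (mul_nonneg (by norm_num) (pX 1)) (pY 2)) (pZ 1))) (mul_nonneg (mul_nonneg (mul_nonneg (by norm_num) (pX 1)) (pY 3)) (pZ 0))) (mul_nonneg (mul_nonneg (mul_nonneg (by norm_num) (pX 2)) (pY 0)) (pZ 2))) (mul_nonneg (mul_nonneg (mul_nonneg (by norm_num) (pX 2)) (pY 1)) (pZ 1))) (mul_nonneg (mul_nonneg (mul_nonneg (by norm_num) (pX 2)) (pY 2)) (pZ 0))) (mul_nonneg (mul_nonneg (mul_nonneg (by norm_num) (pX 3)) (pY 0)) (pZ 1))) (mul_nonneg (mul_nonneg (mul_nonneg (by norm_num) (pX 3)) (pY 1)) (pZ 0))) (mul_nonneg (mul_nonneg (mul_nonneg (by norm_num) (pX 4)) (pY 0)) (pZ 0))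

set_option maxHeartbeats 1000000 in
lemma key5 (a b : ℝ) (hab : a ≤ b) (hb1 : b ≤ 1) (hz : 1 ≤ a + b) :
    a*b*(1-b)*(2*a^3 - a^2 - 8*a^2*b + 8*a*b + 4*a*b^2 - 4*b^2)^2
      ≤ (1-a)*(2*b-a)^4*(a+2*b-2*a*b)^2 := by
  have h := Hsum_nonneg (b-a) (1-b) (a+b-1) (by linarith) (by linarith) (by linarith)
  nlinarith [mul_nonneg (show (0:ℝ) ≤ b - a by linarith) h]

lemma keyJ (a b : ℝ) (hab : a ≤ b) (hb1 : b ≤ 1) (hz : 1 ≤ a + b) :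
    4*((1-a)*(1-b)*a*b) ≤ (a+2*b-2*a*b)^2 := by
  have h := Jsum_nonneg (b-a) (1-b) (a+b-1) (by linarith) (by linarith) (by linarith)
  nlinarith [h]
section cores
variable (a b K : ℝ)

lemma G1c (ha : 0 < a) (hab : a < b) (hb1 : b < 1) (hz : 1 ≤ a + b)
    (hK0 : 0 ≤ K) (hK2 : K^2 = (1-a)*(1-b)*a*b) :
    8*b^2 - 8*a*b^2 + 2*a^2 ≤ 2*((2*b + 2*b^2 + a - 3*a*b - 2*a*b^2 + a^2) - 2*(1-b)*K) := by
  have hb0 : 0 < b := ha.trans hab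
  have hlam : (0:ℝ) ≤ a+2*b-2*a*b := by
    nlinarith [mul_nonneg ha.le (by linarith : (0:ℝ) ≤ 1-b),
      mul_nonneg hb0.le (by linarith : (0:ℝ) ≤ 1-a)]
  have hJ := keyJ a b hab.le hb1.le hz
  have h2K : 2*K ≤ a+2*b-2*a*b := by
    apply le_of_sq_le _ _ _ hlam
    nlinarith [hJ, hK2]
  nlinarith [mul_nonneg (by linarith : (0:ℝ) ≤ 1-b)
    (by linarith : (0:ℝ) ≤ a+2*b-2*a*b - 2*K)]

lemma G2c (ha : 0 < a) (hab : a < b) (hb1 : b < 1) (hz : 1 ≤ a + b)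
    (hK0 : 0 ≤ K) (hK2 : K^2 = (1-a)*(1-b)*a*b) :
    2*b*((2*b + 2*b^2 + a - 3*a*b - 2*a*b^2 + a^2) - 2*(1-b)*K) ≤ 8*b^2 - 8*a*b^2 + 2*a^2 := by
  have hb0 : 0 < b := ha.trans hab
  have h1 : (0:ℝ) ≤ 2*b^2+a^2-a*b-2*a*b^2 := by
    nlinarith [sq_nonneg (b-a), mul_nonneg (mul_nonneg hb0.le hb0.le) (by linarith : (0:ℝ) ≤ 1-a),
      mul_nonneg (mul_nonneg hb0.le ha.le) (by linarith : (0:ℝ) ≤ 1-b)]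
  nlinarith [mul_nonneg (by linarith : (0:ℝ) ≤ 1-b) h1,
    mul_nonneg (mul_nonneg (by linarith : (0:ℝ) ≤ 4*b) (by linarith : (0:ℝ) ≤ 1-b)) hK0]

set_option maxHeartbeats 1600000 in
lemma EPos (ha : 0 < a) (hab : a < b) (hb1 : b < 1) (hz : 1 ≤ a + b)
    (hK0 : 0 ≤ K) (hK2 : K^2 = (1-a)*(1-b)*a*b) :
    0 ≤ (1+a+b)*(8*b^2 - 8*a*b^2 + 2*a^2)^2
      - (2*a+4*b+4*a*b)*(8*b^2 - 8*a*b^2 + 2*a^2)*((2*b + 2*b^2 + a - 3*a*b - 2*a*b^2 + a^2) - 2*(1-b)*K)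
      + 8*a*b*((2*b + 2*b^2 + a - 3*a*b - 2*a*b^2 + a^2) - 2*(1-b)*K)^2 := by
  have hb0 : 0 < b := ha.trans hab
  have hlam : (0:ℝ) ≤ a+2*b-2*a*b := by
    nlinarith [mul_nonneg ha.le (by linarith : (0:ℝ) ≤ 1-b),
      mul_nonneg hb0.le (by linarith : (0:ℝ) ≤ 1-a)]
  have hE : (1+a+b)*(8*b^2 - 8*a*b^2 + 2*a^2)^2
      - (2*a+4*b+4*a*b)*(8*b^2 - 8*a*b^2 + 2*a^2)*((2*b + 2*b^2 + a - 3*a*b - 2*a*b^2 + a^2) - 2*(1-b)*K)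
      + 8*a*b*((2*b + 2*b^2 + a - 3*a*b - 2*a*b^2 + a^2) - 2*(1-b)*K)^2
      = 8*a*b*(1-b)^2*(2*a^3 - a^2 - 8*a^2*b + 8*a*b + 4*a*b^2 - 4*b^2)
        + 8*(1-b)*K*((2*b-a)^2*(a+2*b-2*a*b)) := by
    linear_combination (32*a*b*(1-b)^2) * hK2
  rw [hE]
  rcases le_or_gt 0 (2*a^3 - a^2 - 8*a^2*b + 8*a*b + 4*a*b^2 - 4*b^2) with hw | hw
  · have t1 : (0:ℝ) ≤ 8*a*b*(1-b)^2*(2*a^3 - a^2 - 8*a^2*b + 8*a*b + 4*a*b^2 - 4*b^2) :=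
      mul_nonneg (by positivity) hw
    have t2 : (0:ℝ) ≤ 8*(1-b)*K*((2*b-a)^2*(a+2*b-2*a*b)) :=
      mul_nonneg (mul_nonneg (by linarith) hK0) (mul_nonneg (sq_nonneg _) hlam)
    linarith
  · have habw : (0:ℝ) ≤ a*b*(1-b) := mul_nonneg (mul_nonneg ha.le hb0.le) (by linarith)
    have hKe : K^2*((2*b-a)^2*(a+2*b-2*a*b))^2
        = (1-a)*(1-b)*a*b*((2*b-a)^2*(a+2*b-2*a*b))^2 := by rw [hK2]
    have h5 := key5 a b hab.le hb1.le hz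
    have hx : a*b*(1-b)*(-(2*a^3 - a^2 - 8*a^2*b + 8*a*b + 4*a*b^2 - 4*b^2))
        ≤ K*((2*b-a)^2*(a+2*b-2*a*b)) := by
      apply le_of_sq_le
      · linarith [mul_le_mul_of_nonneg_left h5 habw, hKe,
          (by ring : (a*b*(1-b)*(-(2*a^3 - a^2 - 8*a^2*b + 8*a*b + 4*a*b^2 - 4*b^2)))^2
            = a*b*(1-b)*(a*b*(1-b)*(2*a^3 - a^2 - 8*a^2*b + 8*a*b + 4*a*b^2 - 4*b^2)^2)),
          (by ring : (K*((2*b-a)^2*(a+2*b-2*a*b)))^2 = K^2*((2*b-a)^2*(a+2*b-2*a*b))^2)]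
      · exact mul_nonneg hK0 (mul_nonneg (sq_nonneg _) hlam)
    linarith [mul_le_mul_of_nonneg_left hx (show (0:ℝ) ≤ 8*(1-b) by linarith),
      (by ring : 8*(1-b)*(a*b*(1-b)*(-(2*a^3 - a^2 - 8*a^2*b + 8*a*b + 4*a*b^2 - 4*b^2)))
        = -(8*a*b*(1-b)^2*(2*a^3 - a^2 - 8*a^2*b + 8*a*b + 4*a*b^2 - 4*b^2))),
      (by ring : 8*(1-b)*(K*((2*b-a)^2*(a+2*b-2*a*b))) = 8*(1-b)*K*((2*b-a)^2*(a+2*b-2*a*b)))]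

set_option maxHeartbeats 1600000 in
lemma ENeg (ha : 0 < a) (hab : a < b) (hb1 : b < 1) (hz : 1 ≤ a + b)
    (hK0 : 0 ≤ K) (hK2 : K^2 = (1-a)*(1-b)*a*b) :
    (1+a+b)*(8*b^2 - 8*a*b^2 + 2*a^2)^2
      - (2*a+4*b+4*a*b)*(8*b^2 - 8*a*b^2 + 2*a^2)*((2*b + 2*b^2 + a - 3*a*b - 2*a*b^2 + a^2) + 2*(1-b)*K)
      + 8*a*b*((2*b + 2*b^2 + a - 3*a*b - 2*a*b^2 + a^2) + 2*(1-b)*K)^2 ≤ 0 := by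
  have hb0 : 0 < b := ha.trans hab
  have hlam : (0:ℝ) ≤ a+2*b-2*a*b := by
    nlinarith [mul_nonneg ha.le (by linarith : (0:ℝ) ≤ 1-b),
      mul_nonneg hb0.le (by linarith : (0:ℝ) ≤ 1-a)]
  have hE : (1+a+b)*(8*b^2 - 8*a*b^2 + 2*a^2)^2
      - (2*a+4*b+4*a*b)*(8*b^2 - 8*a*b^2 + 2*a^2)*((2*b + 2*b^2 + a - 3*a*b - 2*a*b^2 + a^2) + 2*(1-b)*K)
      + 8*a*b*((2*b + 2*b^2 + a - 3*a*b - 2*a*b^2 + a^2) + 2*(1-b)*K)^2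
      = 8*a*b*(1-b)^2*(2*a^3 - a^2 - 8*a^2*b + 8*a*b + 4*a*b^2 - 4*b^2)
        - 8*(1-b)*K*((2*b-a)^2*(a+2*b-2*a*b)) := by
    linear_combination (32*a*b*(1-b)^2) * hK2
  rw [hE]
  rcases le_or_gt 0 (2*a^3 - a^2 - 8*a^2*b + 8*a*b + 4*a*b^2 - 4*b^2) with hw | hw
  · have habw : (0:ℝ) ≤ a*b*(1-b) := mul_nonneg (mul_nonneg ha.le hb0.le) (by linarith)
    have hKe : K^2*((2*b-a)^2*(a+2*b-2*a*b))^2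
        = (1-a)*(1-b)*a*b*((2*b-a)^2*(a+2*b-2*a*b))^2 := by rw [hK2]
    have h5 := key5 a b hab.le hb1.le hz
    have hx : a*b*(1-b)*(2*a^3 - a^2 - 8*a^2*b + 8*a*b + 4*a*b^2 - 4*b^2)
        ≤ K*((2*b-a)^2*(a+2*b-2*a*b)) := by
      apply le_of_sq_le
      · linarith [mul_le_mul_of_nonneg_left h5 habw, hKe,
          (by ring : (a*b*(1-b)*(2*a^3 - a^2 - 8*a^2*b + 8*a*b + 4*a*b^2 - 4*b^2))^2
            = a*b*(1-b)*(a*b*(1-b)*(2*a^3 - a^2 - 8*a^2*b + 8*a*b + 4*a*b^2 - 4*b^2)^2)),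
          (by ring : (K*((2*b-a)^2*(a+2*b-2*a*b)))^2 = K^2*((2*b-a)^2*(a+2*b-2*a*b))^2)]
      · exact mul_nonneg hK0 (mul_nonneg (sq_nonneg _) hlam)
    linarith [mul_le_mul_of_nonneg_left hx (show (0:ℝ) ≤ 8*(1-b) by linarith),
      (by ring : 8*(1-b)*(a*b*(1-b)*(2*a^3 - a^2 - 8*a^2*b + 8*a*b + 4*a*b^2 - 4*b^2))
        = 8*a*b*(1-b)^2*(2*a^3 - a^2 - 8*a^2*b + 8*a*b + 4*a*b^2 - 4*b^2)),
      (by ring : 8*(1-b)*(K*((2*b-a)^2*(a+2*b-2*a*b))) = 8*(1-b)*K*((2*b-a)^2*(a+2*b-2*a*b)))]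
  · have t1 : 8*a*b*(1-b)^2*(2*a^3 - a^2 - 8*a^2*b + 8*a*b + 4*a*b^2 - 4*b^2) ≤ 0 :=
      mul_nonpos_of_nonneg_of_nonpos (by positivity) hw.le
    have t2 : (0:ℝ) ≤ 8*(1-b)*K*((2*b-a)^2*(a+2*b-2*a*b)) :=
      mul_nonneg (mul_nonneg (by linarith) hK0) (mul_nonneg (sq_nonneg _) hlam)
    linarith

end cores
set_option maxHeartbeats 1600000 in
lemma corePos (a b K S α : ℝ) (ha : 0 < a) (hab : a < b) (hb1 : b < 1) (hz : 1 ≤ a + b)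
    (hK0 : 0 ≤ K) (hK2 : K^2 = (1-a)*(1-b)*a*b)
    (hS : S = Real.sqrt (2 * (1 - α * a) * (1 - 2 * α * b) * a * b))
    (hhalf : 1/2 < α)
    (hα : α * (8*b^2 - 8*a*b^2 + 2*a^2) ≤ (2*b + 2*b^2 + a - 3*a*b - 2*a*b^2 + a^2) - 2*(1-b)*K) :
    0 < 4*S + 2*a + 4*b - 8*α*a*b ∧ (α - 1/2) * (4*S + 2*a + 4*b - 8*α*a*b) ≤ 1 - b := by
  have hb0 : 0 < b := ha.trans hab
  have hb2 : 1/2 < b := by linarith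
  have h1a : a < 1 := by linarith
  have hBB : (0:ℝ) < 8*b^2 - 8*a*b^2 + 2*a^2 := by
    nlinarith [mul_pos ha ha, mul_nonneg (mul_nonneg (by linarith : (0:ℝ) ≤ 8*(1-a)) hb0.le) hb0.le]
  have hG2 := G2c a b K ha hab hb1 hz hK0 hK2
  have hG1 := G1c a b K ha hab hb1 hz hK0 hK2
  have htop : 2*b*α ≤ 1 := by
    nlinarith [mul_le_mul_of_nonneg_left hα (by linarith : (0:ℝ) ≤ 2*b), hG2, hBB]
  have hαa : α*a < 1 := by
    nlinarith [mul_le_mul_of_nonneg_left htop ha.le, hb0]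
  have h2αb : 2*α*b ≤ 1 := by linarith [htop]; 
  have hM0 : (0:ℝ) ≤ 2 * (1 - α * a) * (1 - 2 * α * b) * a * b :=
    mul_nonneg (mul_nonneg (mul_nonneg (by linarith : (0:ℝ) ≤ 2*(1 - α*a))
      (by linarith : (0:ℝ) ≤ 1 - 2*α*b)) ha.le) hb0.le
  have hS0 : 0 ≤ S := hS ▸ Real.sqrt_nonneg _
  have hS2 : S^2 = 2 * (1 - α * a) * (1 - 2 * α * b) * a * b := by
    rw [hS]; exact Real.sq_sqrt hM0
  have hD : 0 < 4*S + 2*a + 4*b - 8*α*a*b := by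
    nlinarith [hS0, mul_le_mul_of_nonneg_left htop (show (0:ℝ) ≤ 4*a by linarith)]
  refine ⟨hD, ?_⟩
  have hNL0 : (0:ℝ) ≤ (2*b + 2*b^2 + a - 3*a*b - 2*a*b^2 + a^2) - 2*(1-b)*K := by
    linarith [hG1, hBB]
  have h46 : (0:ℝ) ≤ 4*b + 4*a*b - 6*a := by
    nlinarith [mul_nonneg hb0.le (by linarith : (0:ℝ) ≤ 2*b-1),
      mul_nonneg (by linarith : (0:ℝ) ≤ b-a) (by linarith : (0:ℝ) ≤ 6-4*b)]
  have hq : 0 ≤ (2*a+4*b+4*a*b)*(8*b^2 - 8*a*b^2 + 2*a^2)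
      - 8*a*b*(α*(8*b^2 - 8*a*b^2 + 2*a^2) + ((2*b + 2*b^2 + a - 3*a*b - 2*a*b^2 + a^2) - 2*(1-b)*K)) := by
    linarith only [mul_le_mul_of_nonneg_left hα (show (0:ℝ) ≤ 8*a*b from by positivity),
      mul_le_mul_of_nonneg_left hG2 (show (0:ℝ) ≤ 4*a by linarith),
      mul_nonneg hBB.le h46]
  have hEP := EPos a b K ha hab hb1 hz hK0 hK2
  have hmono : (1+a+b)*(8*b^2 - 8*a*b^2 + 2*a^2)^2
      - (2*a+4*b+4*a*b)*(8*b^2 - 8*a*b^2 + 2*a^2)*((2*b + 2*b^2 + a - 3*a*b - 2*a*b^2 + a^2) - 2*(1-b)*K)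
      + 8*a*b*((2*b + 2*b^2 + a - 3*a*b - 2*a*b^2 + a^2) - 2*(1-b)*K)^2
      ≤ (8*b^2 - 8*a*b^2 + 2*a^2)^2 * ((1+a+b) - (2*a+4*b+4*a*b)*α + 8*a*b*α^2) := by
    linarith only [mul_nonneg (sub_nonneg.2 hα) hq]
  have hRf0 : 0 ≤ (1+a+b) - (2*a+4*b+4*a*b)*α + 8*a*b*α^2 := by
    have h0 : 0 ≤ (8*b^2 - 8*a*b^2 + 2*a^2)^2 * ((1+a+b) - (2*a+4*b+4*a*b)*α + 8*a*b*α^2) :=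
      le_trans hEP hmono
    nlinarith only [h0, pow_pos hBB 2]
  have hKw : (2*(1-b)*K)^2 = 4*(1-b)^3*((1-a)*(a*b)) := by
    linear_combination (4*(1-b)^2) * hK2
  have hside : 4*(1-b)^3*((1-a)*(a*b)) ≤ ((8*b^2 - 8*a*b^2 + 2*a^2)*α
      - (2*b + 2*b^2 + a - 3*a*b - 2*a*b^2 + a^2))^2 := by
    linarith only [hKw, mul_nonneg
      (show (0:ℝ) ≤ (2*b + 2*b^2 + a - 3*a*b - 2*a*b^2 + a^2) - (8*b^2 - 8*a*b^2 + 2*a^2)*α - 2*(1-b)*K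
        from by linarith [hα])
      (show (0:ℝ) ≤ (2*b + 2*b^2 + a - 3*a*b - 2*a*b^2 + a^2) - (8*b^2 - 8*a*b^2 + 2*a^2)*α + 2*(1-b)*K
        from by linarith [hα, mul_nonneg (show (0:ℝ) ≤ 2*(1-b) by linarith) hK0])]
  have hid : (8*b^2 - 8*a*b^2 + 2*a^2) * (32*(α-1/2)^2*(1-α*a)*(1-2*α*b)*(a*b)
        - ((1+a+b) - (2*a+4*b+4*a*b)*α + 8*a*b*α^2)^2)
      = -2*(((8*b^2 - 8*a*b^2 + 2*a^2)*α - (2*b + 2*b^2 + a - 3*a*b - 2*a*b^2 + a^2))^2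
        - 4*(1-b)^3*((1-a)*(a*b))) := by ring
  have hQle : 32*(α-1/2)^2*(1-α*a)*(1-2*α*b)*(a*b)
      ≤ ((1+a+b) - (2*a+4*b+4*a*b)*α + 8*a*b*α^2)^2 := by
    have h0 : (8*b^2 - 8*a*b^2 + 2*a^2) * (32*(α-1/2)^2*(1-α*a)*(1-2*α*b)*(a*b)
        - ((1+a+b) - (2*a+4*b+4*a*b)*α + 8*a*b*α^2)^2) ≤ 0 := by linarith only [hid, hside]
    nlinarith only [h0, hBB]
  have h16 : ((α-1/2)*(4*S))^2 = 32*(α-1/2)^2*(1-α*a)*(1-2*α*b)*(a*b) := by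
    linear_combination (16*(α-1/2)^2) * hS2
  have h4ts : (α-1/2)*(4*S) ≤ (1+a+b) - (2*a+4*b+4*a*b)*α + 8*a*b*α^2 := by
    apply le_of_sq_le _ _ _ hRf0
    calc ((α-1/2)*(4*S))^2 = 32*(α-1/2)^2*(1-α*a)*(1-2*α*b)*(a*b) := h16
    _ ≤ ((1+a+b) - (2*a+4*b+4*a*b)*α + 8*a*b*α^2)^2 := hQle
  linarith only [h4ts]

set_option maxHeartbeats 1600000 in
lemma coreNeg (a b K S α : ℝ) (ha : 0 < a) (hab : a < b) (hb1 : b < 1) (hz : 1 ≤ a + b)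
    (hK0 : 0 ≤ K) (hK2 : K^2 = (1-a)*(1-b)*a*b)
    (hS : S = Real.sqrt (2 * (1 - α * a) * (1 - 2 * α * b) * a * b))
    (htop : 2*b*α < 1)
    (hα : (2*b + 2*b^2 + a - 3*a*b - 2*a*b^2 + a^2) - 2*(1-b)*K < α * (8*b^2 - 8*a*b^2 + 2*a^2)) :
    0 < 4*S + 2*a + 4*b - 8*α*a*b ∧ 1 - b < (α - 1/2) * (4*S + 2*a + 4*b - 8*α*a*b) := by
  have hb0 : 0 < b := ha.trans hab
  have hb2 : 1/2 < b := by linarith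
  have h1a : a < 1 := by linarith
  have hBB : (0:ℝ) < 8*b^2 - 8*a*b^2 + 2*a^2 := by
    nlinarith [mul_pos ha ha, mul_nonneg (mul_nonneg (by linarith : (0:ℝ) ≤ 8*(1-a)) hb0.le) hb0.le]
  have hG1 := G1c a b K ha hab hb1 hz hK0 hK2
  have hhalf : 1/2 < α := by nlinarith [hG1, hBB]
  have hαa : α*a < 1 := by
    nlinarith [mul_le_mul_of_nonneg_left htop.le ha.le, hb0]
  have hMpos : (0:ℝ) < 2 * (1 - α * a) * (1 - 2 * α * b) * a * b :=
    mul_pos (mul_pos (mul_pos (by linarith : (0:ℝ) < 2*(1 - α*a))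
      (by linarith : (0:ℝ) < 1 - 2*α*b)) ha) hb0
  have hS0 : 0 ≤ S := hS ▸ Real.sqrt_nonneg _
  have hSpos : 0 < S := by rw [hS]; exact Real.sqrt_pos.mpr hMpos
  have hS2 : S^2 = 2 * (1 - α * a) * (1 - 2 * α * b) * a * b := by
    rw [hS]; exact Real.sq_sqrt hMpos.le
  have hD : 0 < 4*S + 2*a + 4*b - 8*α*a*b := by
    nlinarith [hS0, mul_le_mul_of_nonneg_left htop.le (show (0:ℝ) ≤ 4*a by linarith)]
  refine ⟨hD, ?_⟩
  rcases le_or_gt ((1+a+b) - (2*a+4*b+4*a*b)*α + 8*a*b*α^2) 0 with hR | hR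
  · linarith [mul_pos (show (0:ℝ) < α - 1/2 by linarith) hSpos, hR]
  · have h46 : (0:ℝ) ≤ 4*b + 4*a*b - 6*a := by
      nlinarith [mul_nonneg hb0.le (by linarith : (0:ℝ) ≤ 2*b-1),
        mul_nonneg (by linarith : (0:ℝ) ≤ b-a) (by linarith : (0:ℝ) ≤ 6-4*b)]
    have hup : (8*b^2 - 8*a*b^2 + 2*a^2)*α - (2*b + 2*b^2 + a - 3*a*b - 2*a*b^2 + a^2)
        < 2*(1-b)*K := by
      by_contra hge
      push_neg at hge
      have hge' : (2*b + 2*b^2 + a - 3*a*b - 2*a*b^2 + a^2) + 2*(1-b)*K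
          ≤ α * (8*b^2 - 8*a*b^2 + 2*a^2) := by linarith
      have hq : 0 ≤ (2*a+4*b+4*a*b)*(8*b^2 - 8*a*b^2 + 2*a^2)
          - 8*a*b*(α*(8*b^2 - 8*a*b^2 + 2*a^2) + ((2*b + 2*b^2 + a - 3*a*b - 2*a*b^2 + a^2) + 2*(1-b)*K)) := by
        linarith only [mul_le_mul_of_nonneg_left hge' (show (0:ℝ) ≤ 8*a*b from by positivity),
          mul_le_mul_of_nonneg_left htop.le (show (0:ℝ) ≤ 4*a*(8*b^2 - 8*a*b^2 + 2*a^2) from by positivity),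
          mul_nonneg hBB.le h46]
      have hEN := ENeg a b K ha hab hb1 hz hK0 hK2
      have hmono : (8*b^2 - 8*a*b^2 + 2*a^2)^2 * ((1+a+b) - (2*a+4*b+4*a*b)*α + 8*a*b*α^2)
          ≤ (1+a+b)*(8*b^2 - 8*a*b^2 + 2*a^2)^2
          - (2*a+4*b+4*a*b)*(8*b^2 - 8*a*b^2 + 2*a^2)*((2*b + 2*b^2 + a - 3*a*b - 2*a*b^2 + a^2) + 2*(1-b)*K)
          + 8*a*b*((2*b + 2*b^2 + a - 3*a*b - 2*a*b^2 + a^2) + 2*(1-b)*K)^2 := by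
        linarith only [mul_nonneg (sub_nonneg.2 hge') hq]
      linarith only [hEN, hmono, mul_pos (mul_pos hBB hBB) hR]
    have hlow : -(2*(1-b)*K) < (8*b^2 - 8*a*b^2 + 2*a^2)*α
        - (2*b + 2*b^2 + a - 3*a*b - 2*a*b^2 + a^2) := by linarith [hα]
    have hsq : ((8*b^2 - 8*a*b^2 + 2*a^2)*α - (2*b + 2*b^2 + a - 3*a*b - 2*a*b^2 + a^2))^2
        < (2*(1-b)*K)^2 := sq_lt_sq' hlow hup
    have hKw : (2*(1-b)*K)^2 = 4*(1-b)^3*((1-a)*(a*b)) := by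
      linear_combination (4*(1-b)^2) * hK2
    have hid : (8*b^2 - 8*a*b^2 + 2*a^2) * (32*(α-1/2)^2*(1-α*a)*(1-2*α*b)*(a*b)
          - ((1+a+b) - (2*a+4*b+4*a*b)*α + 8*a*b*α^2)^2)
        = -2*(((8*b^2 - 8*a*b^2 + 2*a^2)*α - (2*b + 2*b^2 + a - 3*a*b - 2*a*b^2 + a^2))^2
          - 4*(1-b)^3*((1-a)*(a*b))) := by ring
    have hQ : ((1+a+b) - (2*a+4*b+4*a*b)*α + 8*a*b*α^2)^2
        < 32*(α-1/2)^2*(1-α*a)*(1-2*α*b)*(a*b) := by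
      have h0 : 0 < (8*b^2 - 8*a*b^2 + 2*a^2) * (32*(α-1/2)^2*(1-α*a)*(1-2*α*b)*(a*b)
          - ((1+a+b) - (2*a+4*b+4*a*b)*α + 8*a*b*α^2)^2) := by linarith only [hid, hsq, hKw]
      nlinarith only [h0, hBB]
    have h16 : ((α-1/2)*(4*S))^2 = 32*(α-1/2)^2*(1-α*a)*(1-2*α*b)*(a*b) := by
      linear_combination (16*(α-1/2)^2) * hS2
    have hgt : (1+a+b) - (2*a+4*b+4*a*b)*α + 8*a*b*α^2 < (α-1/2)*(4*S) := by
      apply lt_of_sq_lt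
      · rw [h16]; exact hQ
      · exact mul_nonneg (by linarith) (by linarith)
    linarith only [hgt]

/-- α_NL: the changing point between Segment 2 and Segment 3. -/
noncomputable def alphaNL (PhH PlH PhL PlL : ℝ) : ℝ :=
  (2 * PhH * PlL ^ 2 + PhH * (PhH + 3 * PlL) - (3 * PhH + PlL) + 2
      - 2 * PhL * Real.sqrt (PhH * PhL * PlH * PlL)) /
    (2 * PlH ^ 2 + 8 * PhH * PlL ^ 2)

/-- ξ_NL(α): the non-linear segment of the threshold curve. -/
noncomputable def xiNL (PhH PlH PhL PlL α : ℝ) : ℝ :=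
  (PhH - PhL) /
    (4 * Real.sqrt (2 * (1 - α * PlH) * (1 - 2 * α * PlL) * PlH * PlL)
      + 2 * PlH + 4 * PlL - 8 * α * PlH * PlL)
set_option maxHeartbeats 1000000 in
/-- ξ_NL(α) < Δ(α-1/2)/P_hL exactly above α_NL, and ξ_NL(α) ≥
    Δ(α-1/2)/P_hL on (1/2, α_NL]. -/
theorem stmt_15 (PhH PlH PhL PlL : ℝ)
    (hPhL : 0 < PhL) (hhh : PhL < PhH) (hHL : PhH ≤ PlL) (hPlL : PlL < 1)
    (hsH : PhH + PlH = 1) (hsL : PhL + PlL = 1) :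
    ∀ α : ℝ,
      (α < 1 / (2 * PlL) → alphaNL PhH PlH PhL PlL < α →
        xiNL PhH PlH PhL PlL α < (PhH - PhL) * (α - 1 / 2) / PhL) ∧
      (α ≤ alphaNL PhH PlH PhL PlL → 1 / 2 < α →
        (PhH - PhL) * (α - 1 / 2) / PhL ≤ xiNL PhH PlH PhL PlL α) := by
  have e1 : PhH = 1 - PlH := by linarith
  have e2 : PhL = 1 - PlL := by linarith
  subst e1 e2
  have ha : 0 < PlH := by linarith
  have hab : PlH < PlL := by linarith
  have hb1 : PlL < 1 := hPlL
  have hz : 1 ≤ PlH + PlL := by linarith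
  have hb0 : 0 < PlL := ha.trans hab
  have hb2 : 1/2 < PlL := by linarith
  set K := Real.sqrt ((1 - PlH) * (1 - PlL) * PlH * PlL) with hKdef
  have hK0 : 0 ≤ K := Real.sqrt_nonneg _
  have hK2 : K^2 = (1-PlH)*(1-PlL)*PlH*PlL := by
    rw [hKdef]
    exact Real.sq_sqrt (mul_nonneg (mul_nonneg (mul_nonneg
      (by linarith) (by linarith)) ha.le) hb0.le)
  have hBB : (0:ℝ) < 8*PlL^2 - 8*PlH*PlL^2 + 2*PlH^2 := by
    nlinarith [mul_pos ha ha,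
      mul_nonneg (mul_nonneg (by linarith : (0:ℝ) ≤ 8*(1-PlH)) hb0.le) hb0.le]
  have hNLeq : alphaNL (1 - PlH) PlH (1 - PlL) PlL
      = ((2*PlL + 2*PlL^2 + PlH - 3*PlH*PlL - 2*PlH*PlL^2 + PlH^2) - 2*(1-PlL)*K)
        / (8*PlL^2 - 8*PlH*PlL^2 + 2*PlH^2) := by
    have hden : (0:ℝ) < 2 * PlH ^ 2 + 8 * (1 - PlH) * PlL ^ 2 := by nlinarith [hBB]
    simp only [alphaNL, ← hKdef]
    rw [div_eq_div_iff hden.ne' hBB.ne']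
    ring
  intro α
  constructor
  · intro h1 h2
    rw [hNLeq] at h2
    have hα' : (2*PlL + 2*PlL^2 + PlH - 3*PlH*PlL - 2*PlH*PlL^2 + PlH^2) - 2*(1-PlL)*K
        < α * (8*PlL^2 - 8*PlH*PlL^2 + 2*PlH^2) := (div_lt_iff₀ hBB).mp h2
    have htop : 2*PlL*α < 1 := by
      rw [lt_div_iff₀ (by linarith : (0:ℝ) < 2*PlL)] at h1
      linarith
    obtain ⟨hD, hcore⟩ := coreNeg PlH PlL K
      (Real.sqrt (2 * (1 - α * PlH) * (1 - 2 * α * PlL) * PlH * PlL)) α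
      ha hab hb1 hz hK0 hK2 rfl htop hα'
    simp only [xiNL]
    rw [div_lt_div_iff₀ hD (by linarith : (0:ℝ) < 1 - PlL)]
    nlinarith [mul_lt_mul_of_pos_left hcore (show (0:ℝ) < PlL - PlH by linarith)]
  · intro h1 h2
    rw [hNLeq] at h1
    have hα' : α * (8*PlL^2 - 8*PlH*PlL^2 + 2*PlH^2)
        ≤ (2*PlL + 2*PlL^2 + PlH - 3*PlH*PlL - 2*PlH*PlL^2 + PlH^2) - 2*(1-PlL)*K :=
      (le_div_iff₀ hBB).mp h1
    obtain ⟨hD, hcore⟩ := corePos PlH PlL K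
      (Real.sqrt (2 * (1 - α * PlH) * (1 - 2 * α * PlL) * PlH * PlL)) α
      ha hab hb1 hz hK0 hK2 rfl h2 hα'
    simp only [xiNL]
    rw [div_le_div_iff₀ (by linarith : (0:ℝ) < 1 - PlL) hD]
    nlinarith [mul_le_mul_of_nonneg_left hcore (show (0:ℝ) ≤ PlL - PlH by linarith)]
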